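/- arXiv:1412.4340 — 3 statements merged into one kernel-verified Lean document; each statement's English description precedes it below -/
import Mathlib

section
/- An arrowed daisy graph is gradable if and only if it has no grade-obstructing loop and, for every pair of edges e and f, all paths from e to f have the same grading difference. -/
/-!
Model of a daisy graph (DG): finite vertex set `V`, finite edge set `E`, darts
`D = E × Bool` with an endpoint map.  Every vertex has degree 1 or 6; at each
degree-6 vertex ("triple value") the six darts are partitioned into three
unordered pairs ("consecutive pairs"), encoded by a fixed-point-free
endpoint-preserving involution `mate` on the darts at that vertex.
An arrowed daisy graph (ADG) additionally selects, in each consecutive pair,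
exactly one preferred dart (`pref`).
-/
structure ADG (V E : Type) [Fintype V] [DecidableEq V] [Fintype E] where
  /-- the endpoint of each dart -/
  endpoint : E × Bool → V
  /-- the other dart of the consecutive pair of a dart (at triple values) -/
  mate : E × Bool → E × Bool
  /-- the preferred-dart choice: `pref d = true` means `d` is preferred -/
  pref : E × Bool → Bool
  /-- every vertex has degree 1 or 6 -/
  degree_cond : ∀ w : V,
      (Finset.univ.filter fun d : E × Bool => endpoint d = w).card = 1 ∨
      (Finset.univ.filter fun d : E × Bool => endpoint d = w).card = 6
  mate_endpoint : ∀ d, endpoint (mate d) = endpoint d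
  mate_invol : ∀ d, mate (mate d) = d
  /-- at a triple value, `mate` is fixed-point free: it pairs the six darts
  into three consecutive pairs -/
  mate_ne : ∀ d, (Finset.univ.filter fun d' : E × Bool =>
      endpoint d' = endpoint d).card = 6 → mate d ≠ d
  /-- at a degree-1 vertex there are no consecutive pairs -/
  mate_fix : ∀ d, (Finset.univ.filter fun d' : E × Bool =>
      endpoint d' = endpoint d).card = 1 → mate d = d
  /-- in each consecutive pair exactly one dart is preferred -/
  pref_pair : ∀ d, (Finset.univ.filter fun d' : E × Bool =>
      endpoint d' = endpoint d).card = 6 → pref d = !pref (mate d)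

variable {V E : Type} [Fintype V] [DecidableEq V] [Fintype E]

/-- A triple value is a vertex of degree 6. -/
def ADG.IsTriple (G : ADG V E) (w : V) : Prop :=
  (Finset.univ.filter fun d : E × Bool => G.endpoint d = w).card = 6

/-- The edge `e` is preferred at the vertex `w`: some dart of `e` with
endpoint `w` is preferred. -/
def ADG.PreferredAt (G : ADG V E) (e : E) (w : V) : Prop :=
  ∃ b : Bool, G.endpoint (e, b) = w ∧ G.pref (e, b) = true

/-- The edge `e` is non-preferred at the vertex `w`: some dart of `e` with
endpoint `w` is not preferred. -/
def ADG.NonPreferredAt (G : ADG V E) (e : E) (w : V) : Prop :=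
  ∃ b : Bool, G.endpoint (e, b) = w ∧ G.pref (e, b) = false

/-- A grading: at each triple value `w` there is `a(w) : ℤ` with the preferred
edges at `w` graded `a(w) + 1` and the non-preferred ones graded `a(w)`. -/
def ADG.IsGrading (G : ADG V E) (g : E → ℤ) : Prop :=
  ∀ w : V, G.IsTriple w → ∃ a : ℤ,
    (∀ e : E, G.PreferredAt e w → g e = a + 1) ∧
    (∀ e : E, G.NonPreferredAt e w → g e = a)

/-- A grade-obstructing loop: an edge whose two darts have the same endpoint,
one dart preferred and the other non-preferred. -/
def ADG.GradeObstructingLoop (G : ADG V E) (e : E) : Prop :=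
  ∃ w : V, G.endpoint (e, false) = w ∧ G.endpoint (e, true) = w ∧
    G.pref (e, false) ≠ G.pref (e, true)

/-- A path `e₀, w₀, e₁, w₁, …, w_{r-1}, e_r`: each intermediate vertex `wₖ` is
the endpoint of a dart of `eₖ` and of a dart of `e_{k+1}`. -/
def ADG.IsPath (G : ADG V E) (r : ℕ) (es : Fin (r + 1) → E) (ws : Fin r → V) :
    Prop :=
  ∀ k : Fin r, (∃ b : Bool, G.endpoint (es k.castSucc, b) = ws k) ∧
    (∃ b : Bool, G.endpoint (es k.succ, b) = ws k)

open Classical in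
/-- The grading difference `Δg(e, w, f)`: it is `1` if `f` is preferred at `w`
and `e` is not, `-1` if `e` is preferred at `w` and `f` is not, and `0`
otherwise. -/
noncomputable def ADG.gradeDiff (G : ADG V E) (e : E) (w : V) (f : E) : ℤ :=
  (if G.PreferredAt f w then 1 else 0) - (if G.PreferredAt e w then 1 else 0)

/-- The grading difference of a path: the sum of the grading differences
`Δg(e_{k-1}, w_{k-1}, e_k)`. -/
noncomputable def ADG.pathDiff (G : ADG V E) (r : ℕ) (es : Fin (r + 1) → E)
    (ws : Fin r → V) : ℤ :=
  ∑ k : Fin r, G.gradeDiff (es k.castSucc) (ws k) (es k.succ)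

/-!
A grading is exactly a potential for the grading differences: `g` is a grading iff
`Δg(e, w, f) = g f - g e` whenever `e` and `f` meet at `w`. For this one needs that no edge is
both preferred and non-preferred at a triple value, which is what excluding grade-obstructing
loops says. A potential telescopes along paths, so path differences depend only on the end
edges. Conversely, if they do, fix a base edge among those from which `e` can be reached (a set
that does not change when passing to an edge meeting `e`) and let `g e` be the grading
difference of a path from the base edge to `e`.
-/

theorem Fin.sum_univ_succ_sub_castSucc {M : Type*} [AddCommGroup M] :
    ∀ {r : ℕ} (f : Fin (r + 1) → M),
      ∑ k : Fin r, (f k.succ - f k.castSucc) = f (Fin.last r) - f 0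
  | 0, f => by simp
  | r + 1, f => by
    rw [← Fin.succ_last, ← Fin.sum_Iic_sub, ← Fin.top_eq_last, Finset.Iic_top]

namespace ADG

open Classical

variable {G : ADG V E}

def Incident (G : ADG V E) (e : E) (w : V) : Prop :=
  ∃ b : Bool, G.endpoint (e, b) = w

theorem PreferredAt.incident {e : E} {w : V} (h : G.PreferredAt e w) : G.Incident e w :=
  let ⟨b, hb, _⟩ := h
  ⟨b, hb⟩

theorem NonPreferredAt.incident {e : E} {w : V} (h : G.NonPreferredAt e w) : G.Incident e w :=
  let ⟨b, hb, _⟩ := h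
  ⟨b, hb⟩

theorem eq_of_endpoint_eq_of_not_isTriple {w : V} (hw : ¬ G.IsTriple w) {d d' : E × Bool}
    (hd : G.endpoint d = w) (hd' : G.endpoint d' = w) : d = d' :=
  Finset.card_le_one.mp ((G.degree_cond w).resolve_right hw).le d (by simpa using hd) d'
    (by simpa using hd')

theorem gradeObstructingLoop_iff {e : E} :
    G.GradeObstructingLoop e ↔ ∃ w, G.PreferredAt e w ∧ G.NonPreferredAt e w := by
  constructor
  · rintro ⟨w, h₀, h₁, hne⟩
    cases hp : G.pref (e, false) <;> rw [hp] at hne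
    · exact ⟨w, ⟨true, h₁, by simpa using hne.symm⟩, ⟨false, h₀, hp⟩⟩
    · exact ⟨w, ⟨false, h₀, hp⟩, ⟨true, h₁, by simpa using hne.symm⟩⟩
  · rintro ⟨w, ⟨b, hb, hpb⟩, ⟨b', hb', hpb'⟩⟩
    cases b <;> cases b' <;> simp_all [GradeObstructingLoop]

theorem IsGrading.gradeDiff_eq_sub {g : E → ℤ} (hg : G.IsGrading g) {e f : E} {w : V}
    (he : G.Incident e w) (hf : G.Incident f w) : G.gradeDiff e w f = g f - g e := by
  by_cases hw : G.IsTriple w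
  · obtain ⟨a, hpref, hnonpref⟩ := hg w hw
    have key : ∀ x, G.Incident x w → g x = a + if G.PreferredAt x w then 1 else 0 := by
      rintro x ⟨b, hb⟩
      by_cases hx : G.PreferredAt x w
      · simp [hx, hpref x hx]
      · have hpb : G.pref (x, b) = false := by simpa using fun h => hx ⟨b, hb, h⟩
        simp [hx, hnonpref x ⟨b, hb, hpb⟩]
    rw [gradeDiff, key e he, key f hf]
    ring
  · obtain ⟨b, hb⟩ := he
    obtain ⟨b', hb'⟩ := hf
    obtain rfl : e = f := congrArg Prod.fst (eq_of_endpoint_eq_of_not_isTriple hw hb hb')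
    simp [gradeDiff]

theorem IsGrading.pathDiff_eq_sub {g : E → ℤ} (hg : G.IsGrading g) {r : ℕ}
    {es : Fin (r + 1) → E} {ws : Fin r → V} (hp : G.IsPath r es ws) :
    G.pathDiff r es ws = g (es (Fin.last r)) - g (es 0) := by
  rw [pathDiff, Finset.sum_congr rfl fun k _ => hg.gradeDiff_eq_sub (hp k).1 (hp k).2]
  exact Fin.sum_univ_succ_sub_castSucc (g ∘ es)

theorem IsGrading.not_gradeObstructingLoop {g : E → ℤ} (hg : G.IsGrading g) (e : E) :
    ¬ G.GradeObstructingLoop e := by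
  rw [gradeObstructingLoop_iff]
  rintro ⟨w, ⟨b, hb, hpb⟩, ⟨b', hb', hpb'⟩⟩
  have hw : G.IsTriple w := by
    by_contra hw
    cases eq_of_endpoint_eq_of_not_isTriple hw hb hb'
    simp_all
  obtain ⟨a, hpref, hnonpref⟩ := hg w hw
  have := (hpref e ⟨b, hb, hpb⟩).symm.trans (hnonpref e ⟨b', hb', hpb'⟩)
  omega

theorem isGrading_of_eq_add_gradeDiff (hloop : ∀ e, ¬ G.GradeObstructingLoop e) {g : E → ℤ}
    (hg : ∀ e f w, G.Incident e w → G.Incident f w → g f = g e + G.gradeDiff e w f) :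
    G.IsGrading g := by
  intro w hw
  obtain ⟨⟨e₀, b₀⟩, hd₀⟩ : (Finset.univ.filter fun d : E × Bool => G.endpoint d = w).Nonempty := by
    rw [← Finset.card_pos, hw]
    norm_num
  have he₀ : G.Incident e₀ w := ⟨b₀, by simpa using hd₀⟩
  refine ⟨g e₀ - if G.PreferredAt e₀ w then 1 else 0, fun e he => ?_, fun e he => ?_⟩
  · rw [hg e₀ e w he₀ he.incident, gradeDiff, if_pos he]
    ring
  · have hnp : ¬ G.PreferredAt e w := fun hp => hloop e (gradeObstructingLoop_iff.mpr ⟨w, hp, he⟩)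
    rw [hg e₀ e w he₀ he.incident, gradeDiff, if_neg hnp]
    ring

def HasPathDiff (G : ADG V E) (x e : E) (n : ℤ) : Prop :=
  ∃ (r : ℕ) (es : Fin (r + 1) → E) (ws : Fin r → V),
    G.IsPath r es ws ∧ es 0 = x ∧ es (Fin.last r) = e ∧ G.pathDiff r es ws = n

theorem hasPathDiff_self (e : E) : G.HasPathDiff e e 0 :=
  ⟨0, fun _ => e, Fin.elim0, fun k => k.elim0, rfl, rfl, by simp [pathDiff]⟩

theorem IsPath.snoc {r : ℕ} {es : Fin (r + 1) → E} {ws : Fin r → V} (hp : G.IsPath r es ws)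
    {w : V} {f : E} (hl : G.Incident (es (Fin.last r)) w) (hf : G.Incident f w) :
    G.IsPath (r + 1) (Fin.snoc es f) (Fin.snoc ws w) := by
  refine Fin.lastCases ?_ fun k => ?_
  · simpa only [Fin.snoc_castSucc, Fin.snoc_last, Fin.succ_last] using ⟨hl, hf⟩
  · simpa only [Fin.snoc_castSucc, Fin.succ_castSucc] using hp k

theorem pathDiff_snoc {r : ℕ} (es : Fin (r + 1) → E) (ws : Fin r → V) (w : V) (f : E) :
    G.pathDiff (r + 1) (Fin.snoc es f) (Fin.snoc ws w) =
      G.pathDiff r es ws + G.gradeDiff (es (Fin.last r)) w f := by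
  simp only [pathDiff, Fin.sum_univ_castSucc, Fin.succ_castSucc, Fin.snoc_castSucc, Fin.snoc_last,
    Fin.succ_last]

theorem HasPathDiff.snoc {x e f : E} {w : V} {n : ℤ} (h : G.HasPathDiff x e n)
    (he : G.Incident e w) (hf : G.Incident f w) : G.HasPathDiff x f (n + G.gradeDiff e w f) := by
  obtain ⟨r, es, ws, hp, rfl, rfl, rfl⟩ := h
  exact ⟨r + 1, _, _, hp.snoc he hf, by simp, by simp, pathDiff_snoc es ws w f⟩

def reachers (G : ADG V E) (e : E) : Set E :=
  {x | ∃ n, G.HasPathDiff x e n}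

theorem reachers_eq_of_incident {e f : E} {w : V} (he : G.Incident e w) (hf : G.Incident f w) :
    G.reachers e = G.reachers f :=
  Set.ext fun _ => ⟨fun ⟨_, h⟩ => ⟨_, h.snoc he hf⟩, fun ⟨_, h⟩ => ⟨_, h.snoc hf he⟩⟩

noncomputable def basepoint (G : ADG V E) (e : E) : E :=
  (show (G.reachers e).Nonempty from ⟨e, 0, hasPathDiff_self e⟩).some

theorem basepoint_mem_reachers (e : E) : G.basepoint e ∈ G.reachers e :=
  Set.Nonempty.some_mem _

theorem basepoint_eq_of_incident {e f : E} {w : V} (he : G.Incident e w) (hf : G.Incident f w) :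
    G.basepoint e = G.basepoint f := by
  simp only [basepoint, reachers_eq_of_incident he hf]

noncomputable def potential (G : ADG V E) (e : E) : ℤ :=
  (basepoint_mem_reachers (G := G) e).choose

theorem hasPathDiff_potential (e : E) : G.HasPathDiff (G.basepoint e) e (G.potential e) :=
  (basepoint_mem_reachers e).choose_spec

theorem potential_eq_add_gradeDiff
    (hindep : ∀ x e n m, G.HasPathDiff x e n → G.HasPathDiff x e m → n = m)
    {e f : E} {w : V} (he : G.Incident e w) (hf : G.Incident f w) :
    G.potential f = G.potential e + G.gradeDiff e w f :=
  hindep _ _ _ _ (hasPathDiff_potential f)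
    (basepoint_eq_of_incident he hf ▸ (hasPathDiff_potential e).snoc he hf)

end ADG

/-- An arrowed daisy graph is gradable iff it has no
grade-obstructing loop and, for every pair of edges `e` and `f`, all paths
from `e` to `f` have the same grading difference. -/
theorem gradable_iff_no_loop_and_path_independent (G : ADG V E) :
    (∃ g : E → ℤ, G.IsGrading g) ↔
      ((¬ ∃ e : E, G.GradeObstructingLoop e) ∧
        ∀ (e f : E) (r₁ r₂ : ℕ)
          (es₁ : Fin (r₁ + 1) → E) (ws₁ : Fin r₁ → V)
          (es₂ : Fin (r₂ + 1) → E) (ws₂ : Fin r₂ → V),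
          G.IsPath r₁ es₁ ws₁ → G.IsPath r₂ es₂ ws₂ →
          es₁ 0 = e → es₁ (Fin.last r₁) = f →
          es₂ 0 = e → es₂ (Fin.last r₂) = f →
          G.pathDiff r₁ es₁ ws₁ = G.pathDiff r₂ es₂ ws₂) := by
  constructor
  · rintro ⟨g, hg⟩
    refine ⟨fun ⟨e, he⟩ => hg.not_gradeObstructingLoop e he, ?_⟩
    intro e f r₁ r₂ es₁ ws₁ es₂ ws₂ hp₁ hp₂ h₁ h₁' h₂ h₂'
    rw [hg.pathDiff_eq_sub hp₁, hg.pathDiff_eq_sub hp₂, h₁, h₁', h₂, h₂']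
  · rintro ⟨hloop, hindep⟩
    refine ⟨G.potential, ADG.isGrading_of_eq_add_gradeDiff (fun e he => hloop ⟨e, he⟩)
      fun e f w he hf => ADG.potential_eq_add_gradeDiff ?_ he hf⟩
    rintro x e _ _ ⟨r₁, es₁, ws₁, hp₁, h₁, h₁', rfl⟩ ⟨r₂, es₂, ws₂, hp₂, h₂, h₂', rfl⟩
    exact hindep x e r₁ r₂ es₁ ws₁ es₂ ws₂ hp₁ hp₂ h₁ h₁' h₂ h₂'
end

section
/- If every closed arc of a daisy graph has an even number of edges, then there exists a function g : E → {0,1} such that g(e) ≠ g(f) whenever some dart of the edge e and some dart of the edge f form a consecutive pair (a 'short grading'). -/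
/-!
Model of a daisy graph (DG): finite vertex set `V`, finite edge set `E`, darts
`D = E × Bool` with an endpoint map.  Every vertex has degree 1 or 6; at each
degree-6 vertex ("triple value") the six darts are partitioned into three
unordered pairs ("consecutive pairs"), encoded by a fixed-point-free
endpoint-preserving involution `mate` on the darts at that vertex.
-/
structure DG (V E : Type) [Fintype V] [DecidableEq V] [Fintype E] where
  /-- the endpoint of each dart -/
  endpoint : E × Bool → V
  /-- the other dart of the consecutive pair of a dart (at triple values) -/
  mate : E × Bool → E × Bool
  /-- every vertex has degree 1 or 6 -/
  degree_cond : ∀ w : V,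
      (Finset.univ.filter fun d : E × Bool => endpoint d = w).card = 1 ∨
      (Finset.univ.filter fun d : E × Bool => endpoint d = w).card = 6
  mate_endpoint : ∀ d, endpoint (mate d) = endpoint d
  mate_invol : ∀ d, mate (mate d) = d
  /-- at a triple value, `mate` is fixed-point free: it pairs the six darts
  into three consecutive pairs -/
  mate_ne : ∀ d, (Finset.univ.filter fun d' : E × Bool =>
      endpoint d' = endpoint d).card = 6 → mate d ≠ d
  /-- at a degree-1 vertex there are no consecutive pairs -/
  mate_fix : ∀ d, (Finset.univ.filter fun d' : E × Bool =>
      endpoint d' = endpoint d).card = 1 → mate d = d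

variable {V E : Type} [Fintype V] [DecidableEq V] [Fintype E]

/-- A triple value is a vertex of degree 6. -/
def DG.IsTriple (G : DG V E) (w : V) : Prop :=
  (Finset.univ.filter fun d : E × Bool => G.endpoint d = w).card = 6

/-- The other dart of the same edge. -/
def flipDart (d : E × Bool) : E × Bool := (d.1, !d.2)

/-- Two darts are consecutive: they form a consecutive pair at a triple
value. -/
def DG.Consecutive (G : DG V E) (d d' : E × Bool) : Prop :=
  G.IsTriple (G.endpoint d) ∧ G.mate d = d'

/-- A closed arc of length `r ≥ 1`: a cyclic sequence of pairwise distinct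
darts `d₁, d₁', d₂, d₂', …, d_r, d_r'` where `d_k` and `d_k' = flipDart d_k`
are the two darts of a single edge and `d_k'` is consecutive to `d_{k+1}`
(indices mod `r`).  Here `a k = d_{k+1}`, and pairwise distinctness of all
`2r` darts is equivalent to the edges being pairwise distinct. -/
def DG.IsClosedArc (G : DG V E) (r : ℕ) (a : ℕ → E × Bool) : Prop :=
  1 ≤ r ∧
  (∀ j k : ℕ, j < r → k < r → j ≠ k → (a j).1 ≠ (a k).1) ∧
  (∀ k : ℕ, k < r → G.Consecutive (flipDart (a k)) (a ((k + 1) % r)))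

lemma flipDart_flipDart (d : E × Bool) : flipDart (flipDart d) = d := by
  simp [flipDart]

lemma flipDart_fst (d : E × Bool) : (flipDart d).1 = d.1 := rfl

lemma eq_or_eq_flipDart {d d' : E × Bool} (h : d'.1 = d.1) :
    d' = d ∨ d' = flipDart d := by
  rcases d with ⟨e, b⟩
  rcases d' with ⟨e', b'⟩
  simp only [flipDart] at *
  subst h
  rcases b with _ | _ <;> rcases b' with _ | _ <;> simp

def DG.Step (G : DG V E) (e f : E) : Prop :=
  ∃ d : E × Bool, d.1 = e ∧ G.IsTriple (G.endpoint d) ∧ (G.mate d).1 = f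

lemma DG.Step.symm {G : DG V E} {e f : E} (h : G.Step e f) : G.Step f e := by
  obtain ⟨d, h1, h2, h3⟩ := h
  refine ⟨G.mate d, h3, ?_, ?_⟩
  · rw [G.mate_endpoint]; exact h2
  · rw [G.mate_invol]; exact h1

def DG.Reach (G : DG V E) : ℕ → E → E → Prop
  | 0, e, f => e = f
  | n + 1, e, f => ∃ x, G.Step e x ∧ G.Reach n x f

lemma DG.Reach.trans {G : DG V E} :
    ∀ {m : ℕ} {n : ℕ} {e f g : E}, G.Reach m e f → G.Reach n f g → G.Reach (m + n) e g := by
  intro m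
  induction m with
  | zero =>
      intro n e f g h1 h2
      have he : e = f := h1
      rw [Nat.zero_add, he]; exact h2
  | succ m IH =>
      intro n e f g h1 h2
      obtain ⟨x, hx, hr⟩ := h1
      have : G.Reach (m + n + 1) e g := ⟨x, hx, IH hr h2⟩
      rwa [show m + 1 + n = m + n + 1 by omega]

lemma DG.Reach.snoc {G : DG V E} {n : ℕ} {e f g : E}
    (h1 : G.Reach n e f) (h2 : G.Step f g) : G.Reach (n + 1) e g :=
  h1.trans (show G.Reach 1 f g from ⟨g, h2, rfl⟩)

lemma DG.Reach.symm {G : DG V E} :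
    ∀ {n : ℕ} {e f : E}, G.Reach n e f → G.Reach n f e := by
  intro n
  induction n with
  | zero => intro e f h; exact (show e = f from h).symm
  | succ n IH =>
      intro e f h
      obtain ⟨x, hx, hr⟩ := h
      exact (IH hr).snoc hx.symm

lemma reach_toFun {G : DG V E} :
    ∀ {n : ℕ} {e f : E}, G.Reach n e f →
      ∃ w : ℕ → E, w 0 = e ∧ w n = f ∧ ∀ k < n, G.Step (w k) (w (k + 1)) := by
  intro n
  induction n with
  | zero =>
      intro e f hh
      exact ⟨fun _ => e, rfl, (show e = f from hh) ▸ rfl, fun k hk => absurd hk (by omega)⟩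
  | succ n IH =>
      intro e f hh
      obtain ⟨x, hx, hr⟩ := hh
      obtain ⟨w', hw0, hwn, hst⟩ := IH hr
      refine ⟨fun k => if k = 0 then e else w' (k - 1), by simp, by simp [hwn], ?_⟩
      intro k hk
      match k with
      | 0 => simpa [hw0] using hx
      | m + 1 =>
          have : m < n := by omega
          simpa using hst m this

lemma reach_ofFun {G : DG V E} (w : ℕ → E) :
    ∀ n : ℕ, (∀ k < n, G.Step (w k) (w (k + 1))) → G.Reach n (w 0) (w n) := by
  intro n
  induction n with
  | zero => intro _; rfl
  | succ n IH =>
      intro hst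
      exact (IH fun k hk => hst k (by omega)).snoc (hst n (by omega))

lemma step_self_false {G : DG V E}
    (h : ∀ (r : ℕ) (a : ℕ → E × Bool), G.IsClosedArc r a → Even r)
    {e : E} (hs : G.Step e e) : False := by
  obtain ⟨d, h1, h2, h3⟩ := hs
  have hne : G.mate d ≠ d := G.mate_ne d h2
  have hmd : G.mate d = flipDart d :=
    (eq_or_eq_flipDart (show (G.mate d).1 = d.1 by rw [h3, h1])).resolve_left hne
  have harc : G.IsClosedArc 1 (fun _ => flipDart d) := by
    refine ⟨le_refl 1, fun j k hj hk hjk => absurd (show j = k by omega) hjk, fun k hk => ⟨?_, ?_⟩⟩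
    · show G.IsTriple (G.endpoint (flipDart (flipDart d)))
      rw [flipDart_flipDart]; exact h2
    · show G.mate (flipDart (flipDart d)) = flipDart d
      rw [flipDart_flipDart]; exact hmd
  exact Nat.not_even_one (h 1 _ harc)

lemma no_odd_closed {G : DG V E}
    (h : ∀ (r : ℕ) (a : ℕ → E × Bool), G.IsClosedArc r a → Even r) :
    ∀ n : ℕ, Odd n → ∀ e : E, ¬ G.Reach n e e := by
  intro n
  induction n using Nat.strong_induction_on with
  | _ n IH =>
  intro hodd e hre
  obtain ⟨w, hw0, hwn, hstep⟩ := reach_toFun hre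
  have hn1 : 1 ≤ n := by rcases hodd with ⟨k, hk⟩; omega
  by_cases hn1' : n = 1
  · subst hn1'
    have h1 := hstep 0 (by omega)
    rw [show w 1 = w 0 by rw [hwn, hw0], hw0] at h1
    exact step_self_false h h1
  have hn3 : 3 ≤ n := by
    rcases hodd with ⟨k, hk⟩; omega
  by_cases hrep : ∃ i j, i < j ∧ j ≤ n ∧ (0 < i ∨ j < n) ∧ w i = w j
  · obtain ⟨i, j, hij, hjn, hside, hwij⟩ := hrep
    have seg : ∀ a b : ℕ, a ≤ b → b ≤ n → G.Reach (b - a) (w a) (w b) := by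
      intro a b hab hbn
      have h2 := reach_ofFun (G := G) (fun k => w (a + k)) (b - a) ?_
      · rw [show a + 0 = a by omega, show a + (b - a) = b by omega] at h2
        exact h2
      · intro k hk
        have h3 := hstep (a + k) (by omega)
        rwa [show a + k + 1 = a + (k + 1) by omega] at h3
    have r1 : G.Reach (j - i) (w i) (w i) := by
      have h2 := seg i j (by omega) hjn
      rwa [← hwij] at h2
    have r2 : G.Reach (i + (n - j)) e e := by
      have ha := seg 0 i (by omega) (by omega)
      have hb := seg j n hjn (le_refl n)
      rw [Nat.sub_zero, hw0] at ha
      rw [hwn, ← hwij] at hb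
      exact ha.trans hb
    have hlt1 : j - i < n := by omega
    have hlt2 : i + (n - j) < n := by omega
    rcases Nat.even_or_odd (j - i) with he1 | ho1
    · have hodd2 : Odd (i + (n - j)) := by
        rw [Nat.odd_iff] at hodd ⊢
        rw [Nat.even_iff] at he1
        omega
      exact IH _ hlt2 hodd2 e r2
    · exact IH _ hlt1 ho1 (w i) r1
  · push_neg at hrep
    have hinj : ∀ i j, i < j → j < n → w i ≠ w j := by
      intro i j h1 h2
      exact hrep i j h1 (by omega) (Or.inr h2)
    have hne2 : ∀ a b : ℕ, a < n → b < n → a ≠ b → w a ≠ w b := by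
      intro a b ha hb hab
      rcases Nat.lt_or_ge a b with hc | hc
      · exact hinj a b hc hb
      · exact fun hEq => hinj b a (by omega) ha hEq.symm
    have hwn0 : w n = w 0 := by rw [hwn, hw0]
    have hustep : ∀ k : ℕ, G.Step (w (k % n)) (w ((k + 1) % n)) := by
      intro k
      have hkn : k % n < n := Nat.mod_lt _ (by omega)
      have h1 : (k + 1) % n = (k % n + 1) % n := (Nat.mod_add_mod k n 1).symm
      by_cases hc : k % n + 1 < n
      · rw [h1, Nat.mod_eq_of_lt hc]
        exact hstep (k % n) hkn
      · have hceq : k % n + 1 = n := by omega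
        have h2 := hstep (k % n) hkn
        rw [hceq, hwn0] at h2
        rw [h1, hceq, Nat.mod_self]
        exact h2
    classical
    set d : ℕ → E × Bool := fun k => Classical.choose (hustep (k % n)) with hd
    have hdspec : ∀ k : ℕ, (d k).1 = w (k % n % n) ∧ G.IsTriple (G.endpoint (d k)) ∧
        (G.mate (d k)).1 = w ((k % n + 1) % n) :=
      fun k => Classical.choose_spec (hustep (k % n))
    have hmodmod : ∀ k : ℕ, k % n % n = k % n := fun k => Nat.mod_mod_of_dvd k dvd_rfl
    have hdper : ∀ a b : ℕ, a % n = b % n → d a = d b := by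
      intro a b hab
      rw [hd]
      exact congrArg (fun m => Classical.choose (hustep m)) hab
    have hdfst : ∀ k : ℕ, (d k).1 = w (k % n) := by
      intro k
      rw [(hdspec k).1, hmodmod]
    have hdmate : ∀ k : ℕ, (G.mate (d k)).1 = w ((k + 1) % n) := by
      intro k
      rw [(hdspec k).2.2, Nat.mod_add_mod]
    have hmodne : ∀ k : ℕ, k % n ≠ (k + 2) % n := by
      intro k heq
      have h2 : n ∣ (k + 2) - k := (Nat.modEq_iff_dvd' (by omega)).mp heq
      rw [show k + 2 - k = 2 by omega] at h2
      have := Nat.le_of_dvd (by norm_num) h2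
      omega
    have hkey : ∀ k : ℕ, G.mate (d k) = flipDart (d (k + 1)) := by
      intro k
      have h1 : (G.mate (d k)).1 = (d (k + 1)).1 := by
        rw [hdmate k, hdfst (k + 1)]
      rcases eq_or_eq_flipDart h1 with hc | hc
      · exfalso
        have h2 : G.mate (d (k + 1)) = d k := by rw [← hc, G.mate_invol]
        have h3 := hdmate (k + 1)
        rw [h2, hdfst k] at h3
        exact hne2 _ _ (Nat.mod_lt _ (by omega)) (Nat.mod_lt _ (by omega))
          (hmodne k) h3
      · exact hc
    have harc : G.IsClosedArc n (fun k => flipDart (d k)) := by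
      refine ⟨hn1, ?_, ?_⟩
      · intro j k hj hk hjk
        show (flipDart (d j)).1 ≠ (flipDart (d k)).1
        rw [flipDart_fst, flipDart_fst, hdfst j, hdfst k,
          Nat.mod_eq_of_lt hj, Nat.mod_eq_of_lt hk]
        exact hne2 j k hj hk hjk
      · intro k hk
        refine ⟨?_, ?_⟩
        · show G.IsTriple (G.endpoint (flipDart (flipDart (d k))))
          rw [flipDart_flipDart]
          exact (hdspec k).2.1
        · show G.mate (flipDart (flipDart (d k))) = flipDart (d ((k + 1) % n))
          rw [flipDart_flipDart, hkey k,
            hdper (k + 1) ((k + 1) % n) (hmodmod (k + 1)).symm]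
    have heven := h n _ harc
    rw [Nat.even_iff] at heven
    rw [Nat.odd_iff] at hodd
    omega

/-- If every closed arc of a daisy graph has an even number of
edges, then there is a "short grading" `g : E → {0,1}`: whenever a dart of the
edge `e` and a dart of the edge `f` form a consecutive pair, `g e ≠ g f`. -/
theorem short_grading_of_even_closedArcs (G : DG V E)
    (h : ∀ (r : ℕ) (a : ℕ → E × Bool), G.IsClosedArc r a → Even r) :
    ∃ g : E → Fin 2, ∀ d d' : E × Bool, G.Consecutive d d' → g d.1 ≠ g d'.1 := by
  classical
  letI s : Setoid E :=
    ⟨fun e f => ∃ n, G.Reach n e f,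
      ⟨fun e => ⟨0, rfl⟩,
       fun hh => hh.elim fun n hn => ⟨n, hn.symm⟩,
       fun h1 h2 => h1.elim fun m hm => h2.elim fun n hn => ⟨m + n, hm.trans hn⟩⟩⟩
  let rep : E → E := fun e => (Quotient.mk s e).out
  have hrep1 : ∀ e : E, ∃ n, G.Reach n (rep e) e := by
    intro e
    exact Quotient.exact (Quotient.out_eq (Quotient.mk s e))
  have hrep2 : ∀ e f : E, G.Step e f → rep e = rep f := by
    intro e f hef
    exact congrArg Quotient.out (Quotient.sound ⟨1, f, hef, rfl⟩)
  refine ⟨fun e => if ∃ n, Odd n ∧ G.Reach n (rep e) e then 1 else 0, ?_⟩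
  have gval : ∀ (x : E) (n : ℕ), G.Reach n (rep x) x →
      ((if ∃ m, Odd m ∧ G.Reach m (rep x) x then (1 : Fin 2) else 0) = 1 ↔ Odd n) := by
    intro x n hx
    split
    · rename_i hcond
      obtain ⟨m, hmo, hm⟩ := hcond
      simp only [iff_true_intro rfl, true_iff]
      by_contra hno
      have heven : Even n := Nat.not_odd_iff_even.mp hno
      have hcl : G.Reach (m + n) (rep x) (rep x) := hm.trans hx.symm
      have : Odd (m + n) := by
        rw [Nat.odd_iff] at hmo ⊢
        rw [Nat.even_iff] at heven
        omega
      exact no_odd_closed h (m + n) this (rep x) hcl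
    · rename_i hcond
      constructor
      · intro h01
        exact absurd h01 (by decide)
      · intro hno
        exact absurd ⟨n, hno, hx⟩ hcond
  intro d d' hc
  have hstep : G.Step d.1 d'.1 := ⟨d, rfl, hc.1, by rw [hc.2]⟩
  obtain ⟨m, hm⟩ := hrep1 d.1
  have hb : rep d'.1 = rep d.1 := (hrep2 d.1 d'.1 hstep).symm
  have hmf : G.Reach (m + 1) (rep d'.1) d'.1 := by
    rw [hb]; exact hm.snoc hstep
  intro heq
  have h1 := gval d.1 m hm
  have h2 := gval d'.1 (m + 1) hmf
  have heq' : (if ∃ n, Odd n ∧ G.Reach n (rep d.1) d.1 then (1 : Fin 2) else 0) =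
      (if ∃ n, Odd n ∧ G.Reach n (rep d'.1) d'.1 then (1 : Fin 2) else 0) := heq
  rw [heq'] at h1
  have h3 : Odd m ↔ Odd (m + 1) := h1.symm.trans h2
  rw [Nat.odd_iff, Nat.odd_iff] at h3
  omega
end

section
/- A daisy graph admits a choice of preferred darts (one dart in each consecutive pair) making it a gradable arrowed daisy graph if and only if every closed arc of the daisy graph has an even number of edges. -/
variable {V E : Type} [Fintype V] [DecidableEq V] [Fintype E]

/-- `pref` is a valid choice of preferred darts: in each consecutive pair at a
triple value, exactly one of the two darts is preferred. -/
def DG.IsArrowing (G : DG V E) (pref : E × Bool → Bool) : Prop :=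
  ∀ d : E × Bool, G.IsTriple (G.endpoint d) → pref d = !pref (G.mate d)

/-- The edge `e` is preferred at the vertex `w` (w.r.t. `pref`): some dart of
`e` with endpoint `w` is preferred. -/
def DG.PreferredAt (G : DG V E) (pref : E × Bool → Bool) (e : E) (w : V) :
    Prop :=
  ∃ b : Bool, G.endpoint (e, b) = w ∧ pref (e, b) = true

/-- The edge `e` is non-preferred at the vertex `w` (w.r.t. `pref`). -/
def DG.NonPreferredAt (G : DG V E) (pref : E × Bool → Bool) (e : E) (w : V) :
    Prop :=
  ∃ b : Bool, G.endpoint (e, b) = w ∧ pref (e, b) = false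

/-- A grading of the arrowed daisy graph `(G, pref)`. -/
def DG.IsGrading (G : DG V E) (pref : E × Bool → Bool) (g : E → ℤ) : Prop :=
  ∀ w : V, G.IsTriple w → ∃ a : ℤ,
    (∀ e : E, G.PreferredAt pref e w → g e = a + 1) ∧
    (∀ e : E, G.NonPreferredAt pref e w → g e = a)

set_option linter.unusedSectionVars false

namespace DaisyAux


open Function

noncomputable section
open scoped Classical

lemma flip_flip (d : E × Bool) : flipDart (flipDart d) = d := by
  cases d; simp [flipDart]

lemma flip_ne (d : E × Bool) : flipDart d ≠ d := by
  cases d with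
  | mk e b => simp [flipDart]

lemma flip_eq_iff {d d' : E × Bool} : flipDart d = d' ↔ d = flipDart d' := by
  constructor <;> rintro rfl <;> simp [flip_flip]

lemma eq_or_flip_of_fst_eq {d d' : E × Bool} (h : d.1 = d'.1) :
    d = d' ∨ d = flipDart d' := by
  cases d with
  | mk e b => cases d' with
    | mk e' b' =>
      dsimp at h; subst h
      rcases Bool.eq_or_eq_not b b' with h | h
      · exact Or.inl (by simp [h])
      · exact Or.inr (by simp [flipDart, h])

variable (G : DG V E)

/-- the "next dart of the arc" permutation -/
def sig (d : E × Bool) : E × Bool := G.mate (flipDart d)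

lemma sig_inj : Function.Injective (sig G) := by
  intro d d' h
  have := congrArg G.mate h
  simp only [sig, G.mate_invol] at this
  have := congrArg flipDart this
  simpa [flip_flip] using this

lemma sig_tau_sig (d : E × Bool) : sig G (flipDart (sig G d)) = flipDart d := by
  simp [sig, flip_flip, G.mate_invol]

lemma iter_tau_iter (k : ℕ) (d : E × Bool) :
    (sig G)^[k] (flipDart ((sig G)^[k] d)) = flipDart d := by
  induction k generalizing d with
  | zero => rfl
  | succ k ih =>
    rw [Function.iterate_succ_apply' (sig G) k d, Function.iterate_succ_apply]
    rw [sig_tau_sig]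
    exact ih d

lemma endpoint_sig (d : E × Bool) :
    G.endpoint (sig G d) = G.endpoint (flipDart d) := G.mate_endpoint _

/-- the step "weight": triple value traversed -/
def Tp (d : E × Bool) : Prop := G.IsTriple (G.endpoint (flipDart d))

lemma not_tp_iff (d : E × Bool) : ¬ Tp G d ↔ sig G d = flipDart d := by
  have hd : ∀ y : E × Bool, (Finset.univ.filter fun d' : E × Bool =>
      G.endpoint d' = G.endpoint y).card = 1 ∨
      (Finset.univ.filter fun d' : E × Bool =>
      G.endpoint d' = G.endpoint y).card = 6 := fun y => G.degree_cond _
  constructor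
  · intro h
    rcases hd (flipDart d) with h1 | h6
    · exact G.mate_fix _ h1
    · exact absurd h6 h
  · intro h htp
    exact G.mate_ne _ htp h

lemma tp_of_up (d : E × Bool) : G.IsTriple (G.endpoint (sig G d)) ↔ Tp G d := by
  rw [endpoint_sig]; exact Iff.rfl

def tw (d : E × Bool) : ZMod 2 := if Tp G d then 1 else 0

def SS (k : ℕ) (d : E × Bool) : ZMod 2 :=
  ∑ j ∈ Finset.range k, tw G ((sig G)^[j] d)

lemma SS_succ (k : ℕ) (d : E × Bool) :
    SS G (k + 1) d = SS G k d + tw G ((sig G)^[k] d) := by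
  rw [SS, Finset.sum_range_succ]; rfl

lemma SS_add (a b : ℕ) (d : E × Bool) :
    SS G (a + b) d = SS G a d + SS G b ((sig G)^[a] d) := by
  induction b with
  | zero => simp [SS]
  | succ b ih =>
    have h1 : a + (b + 1) = (a + b) + 1 := by omega
    rw [h1, SS_succ, ih, SS_succ, ← Function.iterate_add_apply, Nat.add_comm b a]
    ring

/-- minimal period of a dart -/
def npd (d : E × Bool) : ℕ := Function.minimalPeriod (sig G) d

lemma mem_pp (d : E × Bool) : d ∈ Function.periodicPts (sig G) := by
  classical
  have : ¬ Function.Injective (fun k : Fin (Fintype.card (E × Bool) + 1) =>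
      (sig G)^[k.1] d) := by
    intro hinf
    have := Fintype.card_le_of_injective _ hinf
    simp at this
  rw [Function.not_injective_iff] at this
  obtain ⟨a, b, hab, hne⟩ := this
  wlog hlt : b < a generalizing a b
  · exact this b a hab.symm (Ne.symm hne) (by omega)
  refine ⟨a.1 - b.1, by omega, ?_⟩
  have : (sig G)^[b.1] ((sig G)^[a.1 - b.1] d) = (sig G)^[b.1] d := by
    rw [← Function.iterate_add_apply]
    have : b.1 + (a.1 - b.1) = a.1 := by omega
    rw [this, hab]
  have h2 := (sig_inj G).iterate b.1 this
  exact h2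

lemma npd_pos (d : E × Bool) : 0 < npd G d :=
  Function.minimalPeriod_pos_of_mem_periodicPts (mem_pp G d)

lemma iter_npd (d : E × Bool) : (sig G)^[npd G d] d = d :=
  Function.iterate_minimalPeriod

lemma iter_mod (a : ℕ) (d : E × Bool) :
    (sig G)^[a % npd G d] d = (sig G)^[a] d :=
  Function.iterate_mod_minimalPeriod_eq

lemma iter_eq_iff_mod (a b : ℕ) (d : E × Bool) :
    (sig G)^[a] d = (sig G)^[b] d ↔ a % npd G d = b % npd G d := by
  constructor
  · intro h
    by_contra hne
    wlog hlt : b % npd G d < a % npd G d generalizing a b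
    · exact this b a h.symm (Ne.symm hne) (by omega)
    rw [← iter_mod G a d, ← iter_mod G b d] at h
    set a' := a % npd G d
    set b' := b % npd G d
    have : (sig G)^[b'] ((sig G)^[a' - b'] d) = (sig G)^[b'] d := by
      rw [← Function.iterate_add_apply]
      have : b' + (a' - b') = a' := by omega
      rw [this, h]
    have h2 := (sig_inj G).iterate b' this
    have hdvd : npd G d ∣ a' - b' :=
      Function.IsPeriodicPt.minimalPeriod_dvd h2
    have ha : a' < npd G d := Nat.mod_lt _ (npd_pos G d)
    have := Nat.le_of_dvd (by omega) hdvd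
    omega
  · intro h
    rw [← iter_mod G a d, ← iter_mod G b d, h]

lemma exists_iter_back (k : ℕ) (d : E × Bool) :
    ∃ j, (sig G)^[j] ((sig G)^[k] d) = d := by
  refine ⟨npd G d * (k + 1) - k, ?_⟩
  rw [← Function.iterate_add_apply]
  have h1 : npd G d * (k + 1) - k + k = npd G d * (k + 1) := by
    have h2 : k + 1 ≤ npd G d * (k + 1) := Nat.le_mul_of_pos_left _ (npd_pos G d)
    omega
  rw [h1]
  rw [← iter_mod]
  simp [Nat.mul_mod_right]

section Mirror

variable (x : E × Bool) (m : ℕ)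

lemma iter_two_k (k : ℕ) :
    (sig G)^[k] (sig G ((sig G)^[k] x)) = (sig G)^[2 * k + 1] x := by
  rw [← Function.iterate_succ_apply, ← Function.iterate_add_apply]
  congr 1
  omega

lemma not_tp_iter_iff (hm : (sig G)^[m] x = flipDart x) (k : ℕ) :
    ¬ Tp G ((sig G)^[k] x) ↔ (2 * k + 1) % npd G x = m % npd G x := by
  rw [not_tp_iff]
  have key : (sig G)^[k] (flipDart ((sig G)^[k] x)) = (sig G)^[m] x := by
    rw [iter_tau_iter, hm]
  constructor
  · intro h
    have h2 : (sig G)^[k] (sig G ((sig G)^[k] x))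
        = (sig G)^[k] (flipDart ((sig G)^[k] x)) := congrArg _ h
    rw [key, iter_two_k] at h2
    exact (iter_eq_iff_mod G _ _ _).mp h2
  · intro h
    have h2 : (sig G)^[2 * k + 1] x = (sig G)^[m] x :=
      (iter_eq_iff_mod G _ _ _).mpr h
    have h3 : (sig G)^[k] (sig G ((sig G)^[k] x))
        = (sig G)^[k] (flipDart ((sig G)^[k] x)) := by
      rw [key, iter_two_k]; exact h2
    exact (sig_inj G).iterate k h3

lemma no_half (hm : (sig G)^[m] x = flipDart x) (k : ℕ) :
    ¬ ((2 * k) % npd G x = m % npd G x) := by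
  intro h
  have h2 : (sig G)^[2 * k] x = (sig G)^[m] x :=
    (iter_eq_iff_mod G _ _ _).mpr h
  have key : (sig G)^[k] (flipDart ((sig G)^[k] x)) = (sig G)^[m] x := by
    rw [iter_tau_iter, hm]
  have h3 : (sig G)^[k] (flipDart ((sig G)^[k] x)) = (sig G)^[k] ((sig G)^[k] x) := by
    rw [key, ← Function.iterate_add_apply, ← h2]
    norm_num [two_mul]
  have := (sig_inj G).iterate k h3
  exact flip_ne _ this

lemma n_even (hm : (sig G)^[m] x = flipDart x) : Even (npd G x) := by
  by_contra hodd
  have hodd : Odd (npd G x) := Nat.not_even_iff_odd.mp hodd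
  obtain ⟨c, hc⟩ := hodd
  have h2 : 2 ∣ m * (npd G x + 1) := ⟨m * (c + 1), by rw [hc]; ring⟩
  refine no_half G x m hm (m * (npd G x + 1) / 2) ?_
  have h3 : 2 * (m * (npd G x + 1) / 2) = m + m * npd G x := by
    rw [Nat.mul_div_cancel' h2]; ring
  rw [h3, Nat.add_mul_mod_self_right]

lemma m_odd (hm : (sig G)^[m] x = flipDart x) : Odd m := by
  rcases Nat.even_or_odd m with he | ho
  · exfalso
    rcases he with ⟨c, hc⟩
    refine no_half G x m hm c ?_
    have h2 : 2 * c = m := by omega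
    rw [h2]
  · exact ho

lemma mod_two_cases {k mm n : ℕ} (hmn : mm < n) (hk : k < n)
    (h : (2 * k + 1) % n = mm % n) : 2 * k + 1 = mm ∨ 2 * k + 1 = mm + n := by
  have hn : 0 < n := by omega
  rw [Nat.mod_eq_of_lt hmn] at h
  have hq : (2 * k + 1) / n < 2 := Nat.div_lt_of_lt_mul (by omega)
  have hdm := Nat.div_add_mod (2 * k + 1) n
  interval_cases hq2 : (2 * k + 1) / n <;> omega

lemma not_tp_iter_iff' (hm : (sig G)^[m] x = flipDart x) (hmn : m < npd G x)
    (k : ℕ) (hk : k < npd G x) :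
    ¬ Tp G ((sig G)^[k] x) ↔
      (k = (m - 1) / 2 ∨ k = (m - 1) / 2 + npd G x / 2) := by
  have hme := m_odd G x m hm
  have hne := n_even G x m hm
  obtain ⟨c, hc⟩ := hme
  obtain ⟨h, hh⟩ := hne
  rw [not_tp_iter_iff G x m hm k]
  constructor
  · intro hmod
    have := mod_two_cases hmn hk hmod
    omega
  · intro hk12
    rcases hk12 with h1 | h1
    · rw [Nat.mod_eq_of_lt hmn, Nat.mod_eq_of_lt (by omega)]
      omega
    · rw [Nat.mod_eq_of_lt hmn]
      have : 2 * k + 1 = m + npd G x := by omega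
      rw [this, Nat.add_mod_right]
      exact Nat.mod_eq_of_lt hmn

lemma tw_eq (d : E × Bool) : tw G d = 1 + (if ¬ Tp G d then 1 else 0) := by
  by_cases h : Tp G d <;> simp [tw, h] <;> decide

lemma SS_eq_card (k : ℕ) :
    SS G k x = (k : ZMod 2) +
      ((((Finset.range k).filter (fun j => ¬ Tp G ((sig G)^[j] x))).card : ℕ) : ZMod 2) := by
  rw [SS]
  have : ∀ j ∈ Finset.range k,
      tw G ((sig G)^[j] x) = 1 + (if ¬ Tp G ((sig G)^[j] x) then 1 else 0) :=
    fun j _ => tw_eq G _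
  rw [Finset.sum_congr rfl this, Finset.sum_add_distrib, Finset.sum_boole]
  simp

lemma SS_npd_eq_zero_of_mirror (hm : (sig G)^[m] x = flipDart x)
    (hmn : m < npd G x) : SS G (npd G x) x = 0 := by
  have hme := m_odd G x m hm
  have hne := n_even G x m hm
  obtain ⟨c, hc⟩ := hme
  obtain ⟨h, hh⟩ := hne
  have hnpos := npd_pos G x
  have hfil : (Finset.range (npd G x)).filter (fun j => ¬ Tp G ((sig G)^[j] x))
      = {(m - 1) / 2, (m - 1) / 2 + npd G x / 2} := by
    ext j
    simp only [Finset.mem_filter, Finset.mem_range, Finset.mem_insert,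
      Finset.mem_singleton]
    constructor
    · rintro ⟨hj, hj2⟩
      exact (not_tp_iter_iff' G x m hm hmn j hj).mp hj2
    · intro hj
      have hjlt : j < npd G x := by omega
      exact ⟨hjlt, (not_tp_iter_iff' G x m hm hmn j hjlt).mpr hj⟩
  rw [SS_eq_card, hfil]
  have hcard : ({(m - 1) / 2, (m - 1) / 2 + npd G x / 2} : Finset ℕ).card = 2 := by
    rw [Finset.card_insert_of_notMem (by simp; omega), Finset.card_singleton]
  rw [hcard]
  have hzn : ((npd G x : ℕ) : ZMod 2) = 0 :=
    (ZMod.natCast_eq_zero_iff _ _).mpr ⟨h, by omega⟩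
  rw [hzn, ZMod.natCast_self]
  decide

lemma SS_m_eq_zero_of_mirror (hm : (sig G)^[m] x = flipDart x)
    (hmn : m < npd G x) : SS G m x = 0 := by
  have hme := m_odd G x m hm
  have hne := n_even G x m hm
  obtain ⟨c, hc⟩ := hme
  obtain ⟨h, hh⟩ := hne
  have hnpos := npd_pos G x
  have hfil : (Finset.range m).filter (fun j => ¬ Tp G ((sig G)^[j] x))
      = {(m - 1) / 2} := by
    ext j
    simp only [Finset.mem_filter, Finset.mem_range, Finset.mem_singleton]
    constructor
    · rintro ⟨hj, hj2⟩
      have := (not_tp_iter_iff' G x m hm hmn j (by omega)).mp hj2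
      omega
    · intro hj
      have hjlt : j < m := by omega
      exact ⟨hjlt, (not_tp_iter_iff' G x m hm hmn j (by omega)).mpr (Or.inl hj)⟩
  rw [SS_eq_card, hfil, Finset.card_singleton]
  have hzm : ((m : ℕ) : ZMod 2) = 1 := by
    have h2 : m = 2 * c + 1 := hc
    rw [h2]
    push_cast
    rw [show (2 : ZMod 2) = 0 by decide]
    ring
  rw [hzm]
  decide

end Mirror

lemma tw_tau_sig (z : E × Bool) : tw G (flipDart (sig G z)) = tw G z := by
  unfold tw Tp
  rw [flip_flip, endpoint_sig]

lemma LM {a : ℕ} {yy xx : E × Bool} (h : (sig G)^[a] yy = xx) :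
    SS G a (flipDart xx) = SS G a yy := by
  have hpt : ∀ j, j < a →
      tw G ((sig G)^[j] (flipDart xx)) = tw G ((sig G)^[a - 1 - j] yy) := by
    intro j hj
    have h1 : (sig G)^[j] ((sig G)^[a - j] yy) = xx := by
      rw [← Function.iterate_add_apply, ← h]
      congr 1
      omega
    have h2 : (sig G)^[j] (flipDart xx) = flipDart ((sig G)^[a - j] yy) := by
      rw [← h1, iter_tau_iter]
    rw [h2]
    have h3 : (sig G)^[a - j] yy = (sig G) ((sig G)^[a - 1 - j] yy) := by
      rw [show a - j = (a - 1 - j) + 1 by omega, Function.iterate_succ_apply']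
    rw [h3, tw_tau_sig]
  unfold SS
  rw [Finset.sum_congr rfl (fun j hj => hpt j (Finset.mem_range.mp hj))]
  exact Finset.sum_range_reflect (fun j => tw G ((sig G)^[j] yy)) a

section WithHyp

variable (hcl : ∀ (r : ℕ) (a : ℕ → E × Bool), G.IsClosedArc r a → Even r)
include hcl

lemma SS_npd (x : E × Bool) : SS G (npd G x) x = 0 := by
  by_cases hmir : ∃ mm, (sig G)^[mm] x = flipDart x
  · obtain ⟨mm, hmm⟩ := hmir
    have hm : (sig G)^[mm % npd G x] x = flipDart x := by
      rw [iter_mod]; exact hmm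
    exact SS_npd_eq_zero_of_mirror G x _ hm (Nat.mod_lt _ (npd_pos G x))
  · push_neg at hmir
    have htp : ∀ j, Tp G ((sig G)^[j] x) := by
      intro j
      by_contra h
      rw [not_tp_iff] at h
      have h2 := congrArg ((sig G)^[j]) h
      rw [iter_tau_iter, iter_two_k] at h2
      exact hmir _ h2
    have harc : G.IsClosedArc (npd G x) (fun k => (sig G)^[k % npd G x] x) := by
      refine ⟨npd_pos G x, ?_, ?_⟩
      · intro j k hj hk hjk heq
        rcases eq_or_flip_of_fst_eq heq with h | h
        · have h2 := (iter_eq_iff_mod G _ _ _).mp h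
          rw [Nat.mod_mod j _, Nat.mod_mod k _,
            Nat.mod_eq_of_lt hj, Nat.mod_eq_of_lt hk] at h2
          exact hjk h2
        · have h2 := congrArg ((sig G)^[k % npd G x]) h
          rw [iter_tau_iter, ← Function.iterate_add_apply] at h2
          exact hmir _ h2
      · intro k hk
        constructor
        · exact htp _
        · show G.mate (flipDart _) = _
          have h1 : G.mate (flipDart ((sig G)^[k % npd G x] x))
              = (sig G)^[k % npd G x + 1] x := by
            rw [Function.iterate_succ_apply']
            rfl
          rw [h1]
          refine (iter_eq_iff_mod G _ _ _).mpr ?_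
          simp only [Nat.mod_mod]
          exact Nat.ModEq.add_right 1 (Nat.mod_modEq k (npd G x))
    have heven := hcl _ _ harc
    rw [SS_eq_card]
    have hfil : (Finset.range (npd G x)).filter
        (fun j => ¬ Tp G ((sig G)^[j] x)) = ∅ := by
      apply Finset.filter_false_of_mem
      intro j _
      simp [htp j]
    rw [hfil]
    simp
    exact (ZMod.natCast_eq_zero_iff _ _).mpr heven.two_dvd

lemma L1 {mm : ℕ} {x : E × Bool} (h : (sig G)^[mm] x = x) : SS G mm x = 0 := by
  have hdvd : npd G x ∣ mm := Function.IsPeriodicPt.minimalPeriod_dvd h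
  obtain ⟨q, hq⟩ := hdvd
  subst hq
  clear h
  induction q with
  | zero => simp [SS]
  | succ q ih =>
    have h1 : npd G x * (q + 1) = npd G x * q + npd G x := by ring
    rw [h1, SS_add, ih]
    have h2 : (sig G)^[npd G x * q] x = x := by
      rw [← iter_mod]
      simp [Nat.mul_mod_right]
    rw [h2, SS_npd G hcl]
    simp

lemma LB {mm : ℕ} {x : E × Bool} (h : (sig G)^[mm] x = flipDart x) :
    SS G mm x = 0 := by
  have hs : (sig G)^[mm % npd G x] x = flipDart x := by rw [iter_mod]; exact h
  have hmn : mm % npd G x < npd G x := Nat.mod_lt _ (npd_pos G x)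
  have hdm : npd G x * (mm / npd G x) + mm % npd G x = mm := Nat.div_add_mod _ _
  have h2 : (sig G)^[npd G x * (mm / npd G x)] x = x := by
    rw [← iter_mod]
    simp [Nat.mul_mod_right]
  calc SS G mm x = SS G (npd G x * (mm / npd G x) + mm % npd G x) x := by rw [hdm]
    _ = SS G (npd G x * (mm / npd G x)) x
        + SS G (mm % npd G x) ((sig G)^[npd G x * (mm / npd G x)] x) := SS_add G _ _ _
    _ = 0 := by
        rw [L1 G hcl h2, h2, SS_m_eq_zero_of_mirror G x _ hs hmn]
        simp

lemma Cons2 {k l : ℕ} {y : E × Bool} (h : (sig G)^[k] y = (sig G)^[l] y) :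
    SS G k y = SS G l y := by
  wlog hkl : k ≤ l generalizing k l
  · exact (this h.symm (by omega)).symm
  have h1 : (sig G)^[l] y = (sig G)^[k] ((sig G)^[l - k] y) := by
    rw [← Function.iterate_add_apply]
    congr 1
    omega
  have h2 : (sig G)^[l - k] y = y := (sig_inj G).iterate k (by rw [← h1, h])
  have h3 : (sig G)^[l - k] ((sig G)^[k] y) = (sig G)^[k] y := by
    rw [← Function.iterate_add_apply]
    have : l - k + k = l := by omega
    rw [this, ← h]
  calc SS G k y = SS G k y + SS G (l - k) ((sig G)^[k] y) := by
        rw [L1 G hcl h3]; ring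
    _ = SS G (k + (l - k)) y := (SS_add G _ _ _).symm
    _ = SS G l y := by congr 1; omega

lemma Cons {k l : ℕ} {y : E × Bool}
    (h : (sig G)^[k] y = (sig G)^[l] (flipDart y)) :
    SS G k y = SS G l (flipDart y) := by
  set n2 := npd G (flipDart y) with hn2
  set m := (n2 * l - l) + k with hmdef
  have hll : l ≤ n2 * l := Nat.le_mul_of_pos_left _ (npd_pos G _)
  have hm : (sig G)^[m] y = flipDart y := by
    rw [hmdef, Function.iterate_add_apply, h, ← Function.iterate_add_apply]
    have h1 : n2 * l - l + l = n2 * l := by omega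
    rw [h1, ← iter_mod]
    simp [hn2, Nat.mul_mod_right]
  have h2 : (sig G)^[l + m] y = (sig G)^[k] y := by
    rw [Function.iterate_add_apply, hm, ← h]
  calc SS G k y = SS G (l + m) y := Cons2 G hcl h2.symm
    _ = SS G (m + l) y := by rw [Nat.add_comm]
    _ = SS G m y + SS G l ((sig G)^[m] y) := SS_add G _ _ _
    _ = SS G l (flipDart y) := by rw [LB G hcl hm, hm]; ring

end WithHyp


/-! ### The component relation and the colouring -/

def RelD (d y : E × Bool) : Prop :=
  (∃ k, (sig G)^[k] d = y) ∨ (∃ k, (sig G)^[k] (flipDart d) = y)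

lemma relD_refl (d : E × Bool) : RelD G d d := Or.inl ⟨0, rfl⟩

lemma relD_symm {d y : E × Bool} (h : RelD G d y) : RelD G y d := by
  rcases h with ⟨k, hk⟩ | ⟨k, hk⟩
  · obtain ⟨j, hj⟩ := exists_iter_back G k d
    rw [hk] at hj
    exact Or.inl ⟨j, hj⟩
  · refine Or.inr ⟨k, ?_⟩
    rw [← hk, iter_tau_iter, flip_flip]

lemma relD_trans {d y z : E × Bool} (h1 : RelD G d y) (h2 : RelD G y z) :
    RelD G d z := by
  rcases h1 with ⟨k, hk⟩ | ⟨k, hk⟩ <;> rcases h2 with ⟨l, hl⟩ | ⟨l, hl⟩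
  · exact Or.inl ⟨l + k, by rw [Function.iterate_add_apply, hk, hl]⟩
  · -- σ^[k] d = y, σ^[l] (τ y) = z
    have hky : (sig G)^[k] (flipDart y) = flipDart d := by
      rw [← hk, iter_tau_iter]
    obtain ⟨j, hj⟩ := exists_iter_back G k (flipDart y)
    rw [hky] at hj
    exact Or.inr ⟨l + j, by rw [Function.iterate_add_apply, hj, hl]⟩
  · exact Or.inr ⟨l + k, by rw [Function.iterate_add_apply, hk, hl]⟩
  · -- σ^[k] (τ d) = y, σ^[l] (τ y) = z
    have hky : (sig G)^[k] (flipDart y) = d := by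
      rw [← hk, iter_tau_iter, flip_flip]
    obtain ⟨j, hj⟩ := exists_iter_back G k (flipDart y)
    rw [hky] at hj
    exact Or.inl ⟨l + j, by rw [Function.iterate_add_apply, hj, hl]⟩

def sd : Setoid (E × Bool) :=
  ⟨RelD G, ⟨relD_refl G, relD_symm G, relD_trans G⟩⟩

def base (d : E × Bool) : E × Bool :=
  (@Quotient.mk _ (sd G) d).out

lemma base_rel (d : E × Bool) : RelD G (base G d) d :=
  @Quotient.mk_out _ (sd G) d

lemma base_eq_of_rel {d y : E × Bool} (h : RelD G d y) :
    base G d = base G y :=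
  congrArg Quotient.out (@Quotient.sound _ (sd G) _ _ h)

def chi (d : E × Bool) : ZMod 2 :=
  if h : ∃ k, (sig G)^[k] (base G d) = d then SS G (Nat.find h) (base G d)
  else SS G (Nat.find ((base_rel G d).resolve_left h)) (flipDart (base G d))

section WithHyp2

variable (hcl : ∀ (r : ℕ) (a : ℕ → E × Bool), G.IsClosedArc r a → Even r)
include hcl

lemma chi_eq_left {d : E × Bool} {k : ℕ} (hk : (sig G)^[k] (base G d) = d) :
    chi G d = SS G k (base G d) := by
  unfold chi
  split_ifs with h
  · exact Cons2 G hcl ((Nat.find_spec h).trans hk.symm)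
  · exact absurd ⟨k, hk⟩ h

lemma chi_eq_right {d : E × Bool} {k : ℕ}
    (hk : (sig G)^[k] (flipDart (base G d)) = d) :
    chi G d = SS G k (flipDart (base G d)) := by
  unfold chi
  split_ifs with h
  · exact Cons G hcl ((Nat.find_spec h).trans hk.symm)
  · exact Cons2 G hcl ((Nat.find_spec ((base_rel G d).resolve_left h)).trans hk.symm)

lemma chi_sig (d : E × Bool) : chi G (sig G d) = chi G d + tw G d := by
  have hb : base G d = base G (sig G d) :=
    base_eq_of_rel G (Or.inl ⟨1, rfl⟩)
  rcases base_rel G d with ⟨k, hk⟩ | ⟨k, hk⟩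
  · have hk1 : (sig G)^[k + 1] (base G (sig G d)) = sig G d := by
      rw [← hb, Function.iterate_succ_apply', hk]
    rw [chi_eq_left G hcl hk, chi_eq_left G hcl hk1, ← hb, SS_succ, hk]
  · have hk1 : (sig G)^[k + 1] (flipDart (base G (sig G d))) = sig G d := by
      rw [← hb, Function.iterate_succ_apply', hk]
    rw [chi_eq_right G hcl hk, chi_eq_right G hcl hk1, ← hb, SS_succ, hk]


lemma chi_tau (d : E × Bool) : chi G (flipDart d) = chi G d := by
  have hb : base G d = base G (flipDart d) :=
    base_eq_of_rel G (Or.inr ⟨0, rfl⟩)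
  rcases base_rel G d with ⟨k, hk⟩ | ⟨k, hk⟩
  · set b := base G d with hbdef
    have h1 : (sig G)^[k] (flipDart d) = flipDart b := by
      rw [← hk, iter_tau_iter]
    obtain ⟨j, hj0⟩ := exists_iter_back G k (flipDart d)
    rw [h1] at hj0
    have hjd : (sig G)^[j] d = b := by
      have h2 := iter_tau_iter G j (flipDart b)
      rw [hj0, flip_flip, flip_flip] at h2
      exact h2
    have hper : (sig G)^[j + k] b = b := by
      rw [Function.iterate_add_apply, hk, hjd]
    have hctd : chi G (flipDart d) = SS G j (flipDart b) := by
      have h3 : (sig G)^[j] (flipDart (base G (flipDart d))) = flipDart d := by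
        rw [← hb]; exact hj0
      rw [chi_eq_right G hcl h3, ← hb]
    have hLM : SS G j (flipDart b) = SS G j d := LM G hjd
    have h9 : SS G k b + SS G j d = 0 := by
      have h8 := L1 G hcl hper
      rw [Nat.add_comm, SS_add, hk] at h8
      exact h8
    calc chi G (flipDart d) = SS G j (flipDart b) := hctd
      _ = SS G j d := hLM
      _ = SS G k b := by
          rw [eq_neg_of_add_eq_zero_left h9]
          exact (CharTwo.neg_eq _).symm
      _ = chi G d := (chi_eq_left G hcl hk).symm
  · set b := base G d with hbdef
    have h1 : (sig G)^[k] (flipDart d) = b := by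
      rw [← hk, iter_tau_iter, flip_flip]
    obtain ⟨j, hj0⟩ := exists_iter_back G k (flipDart d)
    rw [h1] at hj0
    have hjd : (sig G)^[j] d = flipDart b := by
      have h2 := iter_tau_iter G j b
      rw [hj0, flip_flip] at h2
      exact h2
    have hper : (sig G)^[j + k] (flipDart b) = flipDart b := by
      rw [Function.iterate_add_apply, hk, hjd]
    have hctd : chi G (flipDart d) = SS G j b := by
      have h3 : (sig G)^[j] (base G (flipDart d)) = flipDart d := by
        rw [← hb]; exact hj0
      rw [chi_eq_left G hcl h3, ← hb]
    have hLM : SS G j b = SS G j d := by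
      have h4 := LM G hjd
      rw [flip_flip] at h4
      exact h4
    have h9 : SS G k (flipDart b) + SS G j d = 0 := by
      have h8 := L1 G hcl hper
      rw [Nat.add_comm, SS_add, hk] at h8
      exact h8
    calc chi G (flipDart d) = SS G j b := hctd
      _ = SS G j d := hLM
      _ = SS G k (flipDart b) := by
          rw [eq_neg_of_add_eq_zero_left h9]
          exact (CharTwo.neg_eq _).symm
      _ = chi G d := (chi_eq_right G hcl hk).symm

lemma chi_fst (d : E × Bool) : chi G d = chi G (d.1, false) := by
  cases d with
  | mk e bb =>
    cases bb
    · rfl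
    · have : (e, true) = flipDart (e, false) := by simp [flipDart]
      rw [this, chi_tau G hcl]
      rfl

lemma chi_mate {d : E × Bool} (htrip : G.IsTriple (G.endpoint d)) :
    chi G ((G.mate d).1, false) = chi G (d.1, false) + 1 := by
  have h1 : sig G (flipDart d) = G.mate d := by
    show G.mate (flipDart (flipDart d)) = G.mate d
    rw [flip_flip]
  have h2 : tw G (flipDart d) = 1 := by
    unfold tw Tp
    rw [flip_flip, if_pos htrip]
  have h3 := chi_sig G hcl (flipDart d)
  rw [h1, h2, chi_tau G hcl] at h3
  rw [chi_fst G hcl (G.mate d), chi_fst G hcl d] at h3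
  exact h3


lemma backward :
    ∃ pref : E × Bool → Bool, G.IsArrowing pref ∧
      ∃ g : E → ℤ, G.IsGrading pref g := by
  classical
  set xcol : E → ZMod 2 := fun e => chi G (e, false) with hxcol
  have hz : ∀ z : ZMod 2, z = 0 ∨ z = 1 := by decide
  refine ⟨fun d => decide (xcol d.1 = 1), ?_, ?_⟩
  · intro d htrip
    have h : xcol (G.mate d).1 = xcol d.1 + 1 := chi_mate G hcl htrip
    show decide (xcol d.1 = 1) = !decide (xcol (G.mate d).1 = 1)
    rcases hz (xcol d.1) with h0 | h0
    · rw [h0] at h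
      rw [h0, h]
      decide
    · rw [h0] at h
      have h11 : (1 : ZMod 2) + 1 = 0 := by decide
      rw [h11] at h
      rw [h0, h]
      decide
  · refine ⟨fun e => if xcol e = 1 then 1 else 0, ?_⟩
    intro w hw
    refine ⟨0, ?_, ?_⟩
    · rintro e ⟨bb, hbw, hbp⟩
      have h1 : xcol e = 1 := by
        have := of_decide_eq_true hbp
        exact this
      simp [h1]
    · rintro e ⟨bb, hbw, hbp⟩
      have h1 : ¬ (xcol e = 1) := by
        have := of_decide_eq_false hbp
        exact this
      simp [h1]

end WithHyp2

lemma forward {pref : E × Bool → Bool} (hpref : G.IsArrowing pref) {g : E → ℤ}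
    (hg : G.IsGrading pref g) (r : ℕ) (a : ℕ → E × Bool)
    (ha : G.IsClosedArc r a) : Even r := by
  obtain ⟨hr, hdist, hcons⟩ := ha
  have step : ∀ k, k < r →
      ((g ((a ((k + 1) % r)).1) : ZMod 2)) = (g ((a k).1) : ZMod 2) + 1 := by
    intro k hk
    obtain ⟨htrip, hmate⟩ := hcons k hk
    set d := flipDart (a k) with hd
    set d' := a ((k + 1) % r) with hd'
    have hw' : G.endpoint d' = G.endpoint d := by rw [← hmate, G.mate_endpoint]
    obtain ⟨c, hp, hnp⟩ := hg (G.endpoint d) htrip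
    have harrow : pref d = !pref (G.mate d) := hpref d htrip
    rw [hmate] at harrow
    have hdd : ((a k).1, d.2) = d := rfl
    have hdd' : (d'.1, d'.2) = d' := rfl
    have hwk : G.endpoint ((a k).1, d.2) = G.endpoint d := by rw [hdd]
    have hwk' : G.endpoint (d'.1, d'.2) = G.endpoint d := by rw [hdd']; exact hw'
    have h210 : ∀ z : ZMod 2, z + 1 + 1 = z := by decide
    cases hb : pref d with
    | true =>
      rw [hb] at harrow
      have hb' : pref d' = false := by
        simpa using harrow.symm
      have h1 : g ((a k).1) = c + 1 := hp _ ⟨d.2, hwk, by rw [hdd]; exact hb⟩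
      have h2 : g d'.1 = c := hnp _ ⟨d'.2, hwk', by rw [hdd']; exact hb'⟩
      rw [h1, h2]
      push_cast
      rw [h210]
    | false =>
      rw [hb] at harrow
      have hb' : pref d' = true := by
        simpa using harrow.symm
      have h1 : g ((a k).1) = c := hnp _ ⟨d.2, hwk, by rw [hdd]; exact hb⟩
      have h2 : g d'.1 = c + 1 := hp _ ⟨d'.2, hwk', by rw [hdd']; exact hb'⟩
      rw [h1, h2]
      push_cast
      ring
  have hstep2 : ∀ k : ℕ,
      (g ((a ((k + 1) % r)).1) : ZMod 2) = (g ((a (k % r)).1) : ZMod 2) + 1 := by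
    intro k
    have h1 := step (k % r) (Nat.mod_lt _ hr)
    have h2 : (k % r + 1) % r = (k + 1) % r :=
      Nat.ModEq.add_right 1 (Nat.mod_modEq k r)
    rw [h2] at h1
    exact h1
  have hind : ∀ k : ℕ,
      (g ((a (k % r)).1) : ZMod 2) = (g ((a 0).1) : ZMod 2) + (k : ZMod 2) := by
    intro k
    induction k with
    | zero => simp
    | succ k ih =>
      rw [hstep2 k, ih]
      push_cast
      ring
  have hfin := hind r
  rw [Nat.mod_self] at hfin
  have hr0 : ((r : ℕ) : ZMod 2) = 0 := by
    calc ((r : ℕ) : ZMod 2)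
        = ((g ((a 0).1) : ZMod 2) + (r : ZMod 2)) - (g ((a 0).1) : ZMod 2) := by
          ring
      _ = (g ((a 0).1) : ZMod 2) - (g ((a 0).1) : ZMod 2) := by rw [← hfin]
      _ = 0 := by ring
  have := (ZMod.natCast_eq_zero_iff r 2).mp hr0
  exact even_iff_two_dvd.mpr this

end
end DaisyAux

/-- A daisy graph admits a choice of preferred darts making it
a gradable arrowed daisy graph iff every closed arc has an even number of
edges. -/
theorem arrowable_gradable_iff_even_closedArcs (G : DG V E) :
    (∃ pref : E × Bool → Bool, G.IsArrowing pref ∧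
        ∃ g : E → ℤ, G.IsGrading pref g) ↔
      (∀ (r : ℕ) (a : ℕ → E × Bool), G.IsClosedArc r a → Even r) := by
  constructor
  · rintro ⟨pref, hpref, g, hg⟩ r a ha
    exact DaisyAux.forward G hpref hg r a ha
  · intro hcl
    exact DaisyAux.backward G hcl
end
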